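/- arXiv:1201.1323 — 2 statements merged into one kernel-verified Lean document; each statement's English description precedes it below -/
import Mathlib

section
/- Fix an integer k ≥ 1. Then R_n^{(k,0,0,0)}(x) = n! for all n ≤ k, and for every s ≥ 1, R_{k+s}^{(k,0,0,0)}(x) = k! · Π_{i=1}^{s} (k + i·x). -/
/-!
Removing the first entry `σ 0` of a permutation of `Fin (n + 1)` and standardizing the rest
gives a bijection `S_{n+1} ≃ Fin (n + 1) × S_n`. The first entry has exactly `n - σ 0` larger
entries to its right, all other entries keep their quadrant-I counts, so
`R_{n+1} = (∑_{p ≤ n} x^[k ≤ p]) · R_n`. The factor is `n + 1` when `n < k` and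
`k + (n + 1 - k) x` otherwise.
-/

/-- The number of points in quadrant I relative to position `i`:
indices `j > i` with `σ j > σ i`. -/
def quad1 {n : ℕ} (σ : Equiv.Perm (Fin n)) (i : Fin n) : ℕ :=
  (Finset.univ.filter (fun j => i < j ∧ σ i < σ j)).card

/-- The number of indices `i` such that `σ i` matches the simple marked mesh
pattern `MMP(k,0,0,0)`, i.e. there are at least `k` points in quadrant I. -/
def mmpK {n : ℕ} (k : ℕ) (σ : Equiv.Perm (Fin n)) : ℕ :=
  (Finset.univ.filter (fun i => k ≤ quad1 σ i)).card

/-- `R_n^{(k,0,0,0)}(x) = Σ_{σ ∈ S_n} x^{mmp^{(k,0,0,0)}(σ)}`. -/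
noncomputable def R (k n : ℕ) : Polynomial ℤ :=
  ∑ σ : Equiv.Perm (Fin n), Polynomial.X ^ mmpK k σ

open Equiv Finset Polynomial
open scoped Nat

section

variable {n : ℕ}

def permCons (p : Fin (n + 1)) (τ : Perm (Fin n)) : Perm (Fin (n + 1)) :=
  (Perm.decomposeFin.symm (0, τ)).trans p.cycleRange.symm

@[simp]
lemma permCons_zero (p : Fin (n + 1)) (τ : Perm (Fin n)) : permCons p τ 0 = p := by
  simp [permCons, Perm.decomposeFin_symm_apply_zero]

@[simp]
lemma permCons_succ (p : Fin (n + 1)) (τ : Perm (Fin n)) (i : Fin n) :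
    permCons p τ i.succ = p.succAbove (τ i) := by
  simp [permCons, Perm.decomposeFin_symm_apply_succ]

lemma permCons_bijective :
    Function.Bijective (fun x : Fin (n + 1) × Perm (Fin n) ↦ permCons x.1 x.2) := by
  refine (Fintype.bijective_iff_injective_and_card _).2
    ⟨?_, by simp [Fintype.card_perm, Nat.factorial_succ]⟩
  rintro ⟨p, τ⟩ ⟨q, ρ⟩ h
  have hpq : p = q := by simpa using congrArg (· 0) h
  subst hpq
  have hτρ : τ = ρ := Equiv.ext fun i ↦
    p.succAbove_right_injective (by simpa using congrArg (· i.succ) h)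
  rw [hτρ]

lemma quad1_zero (σ : Perm (Fin (n + 1))) : quad1 σ 0 = n - σ 0 := by
  have hfilter :
      univ.filter (fun j ↦ 0 < j ∧ σ 0 < σ j) = (Ioi (σ 0)).map σ.symm.toEmbedding := by
    ext j
    simp only [mem_filter, mem_univ, true_and, mem_map_equiv, mem_Ioi, symm_symm]
    exact ⟨And.right, fun h ↦ ⟨Fin.pos_iff_ne_zero.2 fun hj ↦ by simp [hj] at h, h⟩⟩
  rw [quad1, hfilter, card_map, Fin.card_Ioi, Nat.add_sub_cancel]

lemma quad1_permCons_succ (p : Fin (n + 1)) (τ : Perm (Fin n)) (i : Fin n) :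
    quad1 (permCons p τ) i.succ = quad1 τ i := by
  rw [quad1, quad1, card_filter, card_filter, Fin.sum_univ_succ]
  simp [Fin.succ_lt_succ_iff, Fin.succAbove_lt_succAbove_iff]

lemma mmpK_permCons (k : ℕ) (p : Fin (n + 1)) (τ : Perm (Fin n)) :
    mmpK k (permCons p τ) = (if k ≤ n - p then 1 else 0) + mmpK k τ := by
  rw [mmpK, mmpK, card_filter, card_filter, Fin.sum_univ_succ]
  simp [quad1_zero, quad1_permCons_succ]

end

lemma R_succ (k n : ℕ) :
    R k (n + 1) = (∑ p ∈ range (n + 1), if k ≤ p then X else 1) * R k n := by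
  rw [R, ← Fintype.sum_bijective _ permCons_bijective _ (fun σ ↦ (X : ℤ[X]) ^ mmpK k σ)
    fun _ ↦ rfl, Fintype.sum_prod_type, R,
    ← Fin.sum_univ_eq_sum_range (fun p ↦ if k ≤ p then (X : ℤ[X]) else 1),
    ← Equiv.sum_comp Fin.revPerm, Fintype.sum_mul_sum]
  refine sum_congr rfl fun p _ ↦ sum_congr rfl fun τ _ ↦ ?_
  simp only [mmpK_permCons, pow_add, Fin.revPerm_apply, Fin.val_rev, Nat.add_sub_add_right,
    Nat.sub_sub_self p.is_le]
  split_ifs <;> simp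

lemma R_of_le (k n : ℕ) (h : n ≤ k) : R k n = (n ! : ℤ[X]) := by
  induction n with
  | zero => simp [R, mmpK]
  | succ n ih =>
    have hweight :
        (∑ p ∈ range (n + 1), if k ≤ p then (X : ℤ[X]) else 1) = (n + 1 : ℕ) := by
      rw [sum_ite_of_false fun p hp ↦ by simp at hp; omega]
      simp
    rw [R_succ, hweight, ih (by omega), Nat.factorial_succ]
    push_cast
    ring

lemma R_add (k s : ℕ) :
    R k (k + s) = (k ! : ℤ[X]) * ∏ i ∈ Icc 1 s, ((k : ℤ[X]) + (i : ℤ[X]) * X) := by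
  induction s with
  | zero => simp [R_of_le]
  | succ s ih =>
    have hweight : (∑ p ∈ range (k + (s + 1)), if k ≤ p then (X : ℤ[X]) else 1) =
        (k : ℤ[X]) + ((s + 1 : ℕ) : ℤ[X]) * X := by
      rw [sum_range_add, sum_ite_of_false fun p hp ↦ by simpa using hp,
        sum_ite_of_true fun p _ ↦ by omega]
      simp
    rw [← add_assoc, R_succ, add_assoc, hweight, ih, prod_Icc_succ_top (by omega)]
    ring

theorem stmt_1_general (k : ℕ) :
    (∀ n, n ≤ k → R k n = (Nat.factorial n : Polynomial ℤ)) ∧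
    (∀ s, 1 ≤ s → R k (k + s) =
      (Nat.factorial k : Polynomial ℤ) *
        ∏ i ∈ Finset.Icc 1 s,
          ((k : Polynomial ℤ) + (i : Polynomial ℤ) * Polynomial.X)) :=
  ⟨R_of_le k, fun s _ ↦ R_add k s⟩

theorem stmt_1 (k : ℕ) (hk : 1 ≤ k) :
    (∀ n, n ≤ k → R k n = (Nat.factorial n : Polynomial ℤ)) ∧
    (∀ s, 1 ≤ s → R k (k + s) =
      (Nat.factorial k : Polynomial ℤ) *
        ∏ i ∈ Finset.Icc 1 s,
          ((k : Polynomial ℤ) + (i : Polynomial ℤ) * Polynomial.X)) :=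
  stmt_1_general k
end

section
/- Fix integers a ≥ 1 and b ≥ 1. Then R_n^{(a,b,0,0)}(x,q) = [n]_q! for all n ≤ a+b, and for every s ≥ 1, R_{a+b+s}^{(a,b,0,0)}(x,q) = [a+b]_q! · Π_{i=1}^{s} ([a]_q + q^{a+i}·[b]_q + q^a·x·[i]_q). -/
/-- The variable `x` of the two-variable polynomial ring. -/
noncomputable def xv : MvPolynomial (Fin 2) ℤ := MvPolynomial.X 0

/-- The variable `q` of the two-variable polynomial ring. -/
noncomputable def qv : MvPolynomial (Fin 2) ℤ := MvPolynomial.X 1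

/-- `[m]_q = 1 + q + ⋯ + q^{m-1}`. -/
noncomputable def qNat (m : ℕ) : MvPolynomial (Fin 2) ℤ :=
  ∑ i ∈ Finset.range m, qv ^ i

/-- `[m]_q! = [1]_q [2]_q ⋯ [m]_q`, with `[0]_q! = 1`. -/
noncomputable def qFact (m : ℕ) : MvPolynomial (Fin 2) ℤ :=
  ∏ i ∈ Finset.range m, qNat (i + 1)

/-- Number of points in quadrant II relative to `(i, σ i)`. -/
def quad2 {n : ℕ} (σ : Equiv.Perm (Fin n)) (i : Fin n) : ℕ :=
  (Finset.univ.filter (fun j => j < i ∧ σ i < σ j)).card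

/-- `mmp^{(a,b,0,0)}(σ)`: the number of indices `i` with at least `a` points
in quadrant I and at least `b` points in quadrant II relative to `(i, σ i)`. -/
def mmpAB {n : ℕ} (a b : ℕ) (σ : Equiv.Perm (Fin n)) : ℕ :=
  (Finset.univ.filter (fun i => a ≤ quad1 σ i ∧ b ≤ quad2 σ i)).card

/-- `coinv(σ)`: the number of pairs `i < j` with `σ i < σ j`. -/
def coinv {n : ℕ} (σ : Equiv.Perm (Fin n)) : ℕ :=
  (Finset.univ.filter (fun p : Fin n × Fin n => p.1 < p.2 ∧ σ p.1 < σ p.2)).card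

/-- `R_n^{(a,b,0,0)}(x,q) = Σ_{σ ∈ S_n} x^{mmp^{(a,b,0,0)}(σ)} q^{coinv(σ)}`. -/
noncomputable def Rq (a b n : ℕ) : MvPolynomial (Fin 2) ℤ :=
  ∑ σ : Equiv.Perm (Fin n), xv ^ mmpAB a b σ * qv ^ coinv σ

/-! Removing the smallest value from `σ ∈ S_{n+1}` leaves a permutation `τ ∈ S_n`.  If that
value sits at position `p`, it has `n - p` larger entries to its right and `p` to its left,
while every other entry keeps both of its quadrant counts.  Hence
`R_{n+1} = (∑_{r ≤ n} w_r q^r) · R_n`, where `r = n - p` and `w_r = x` exactly when `a ≤ r` and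
`b ≤ n - r`.  For `n < a + b` no `w_r` is `x` and the factor is `[n+1]_q`; for `n = a + b + i`,
splitting the range of `r` at `a` and `a + i + 1` gives the factor
`[a]_q + q^{a+i+1} [b]_q + q^a x [i+1]_q`. -/

open Finset

/-- The permutation of `Fin (n + 1)` obtained from `τ` by inserting a new smallest value at
position `p`. -/
noncomputable def insertMin {n : ℕ} (p : Fin (n + 1)) (τ : Equiv.Perm (Fin n)) :
    Equiv.Perm (Fin (n + 1)) :=
  (finSuccEquiv' p).trans (τ.optionCongr.trans (finSuccEquiv n).symm)

section insertMin

variable {n : ℕ} (p : Fin (n + 1)) (τ : Equiv.Perm (Fin n))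

@[simp]
lemma insertMin_self : insertMin p τ p = 0 := by
  simp [insertMin, finSuccEquiv'_at, finSuccEquiv_symm_none]

@[simp]
lemma insertMin_succAbove (k : Fin n) : insertMin p τ (p.succAbove k) = (τ k).succ := by
  simp [insertMin, finSuccEquiv'_succAbove, finSuccEquiv_symm_some]

lemma insertMin_eq_zero_iff {j : Fin (n + 1)} : insertMin p τ j = 0 ↔ j = p := by
  refine ⟨fun h => ?_, fun h => h ▸ insertMin_self p τ⟩
  by_contra hj
  obtain ⟨k, rfl⟩ := Fin.exists_succAbove_eq hj
  exact Fin.succ_ne_zero _ ((insertMin_succAbove p τ k).symm.trans h)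

lemma quad1_insertMin_self : quad1 (insertMin p τ) p = n - p := by
  have : univ.filter (fun j => p < j ∧ insertMin p τ p < insertMin p τ j) = Ioi p := by
    ext j
    simp only [mem_filter, mem_univ, true_and, mem_Ioi, insertMin_self, and_iff_left_iff_imp]
    exact fun hj => Fin.pos_of_ne_zero ((insertMin_eq_zero_iff p τ).not.mpr hj.ne')
  rw [quad1, this, Fin.card_Ioi]
  omega

lemma quad2_insertMin_self : quad2 (insertMin p τ) p = p := by
  have : univ.filter (fun j => j < p ∧ insertMin p τ p < insertMin p τ j) = Iio p := by
    ext j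
    simp only [mem_filter, mem_univ, true_and, mem_Iio, insertMin_self, and_iff_left_iff_imp]
    exact fun hj => Fin.pos_of_ne_zero ((insertMin_eq_zero_iff p τ).not.mpr hj.ne)
  rw [quad2, this, Fin.card_Iio]

lemma quad1_insertMin_succAbove (k : Fin n) :
    quad1 (insertMin p τ) (p.succAbove k) = quad1 τ k := by
  rw [quad1, quad1, card_filter, card_filter, Fin.sum_univ_succAbove _ p]
  simp [Fin.succAbove_lt_succAbove_iff]

lemma quad2_insertMin_succAbove (k : Fin n) :
    quad2 (insertMin p τ) (p.succAbove k) = quad2 τ k := by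
  rw [quad2, quad2, card_filter, card_filter, Fin.sum_univ_succAbove _ p]
  simp [Fin.succAbove_lt_succAbove_iff]

lemma coinv_eq_sum_quad1 (σ : Equiv.Perm (Fin n)) : coinv σ = ∑ i, quad1 σ i := by
  simp only [coinv, quad1, card_filter, Fintype.sum_prod_type]

lemma coinv_insertMin : coinv (insertMin p τ) = coinv τ + (n - p) := by
  simp only [coinv_eq_sum_quad1, Fin.sum_univ_succAbove _ p, quad1_insertMin_self,
    quad1_insertMin_succAbove]
  ring

lemma mmpAB_insertMin (a b : ℕ) : mmpAB a b (insertMin p τ) =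
    mmpAB a b τ + if a ≤ n - p ∧ b ≤ p then 1 else 0 := by
  simp only [mmpAB, card_filter, Fin.sum_univ_succAbove _ p, quad1_insertMin_self,
    quad2_insertMin_self, quad1_insertMin_succAbove, quad2_insertMin_succAbove]
  ring

end insertMin

lemma insertMin_bijective (n : ℕ) :
    Function.Bijective fun pτ : Fin (n + 1) × Equiv.Perm (Fin n) => insertMin pτ.1 pτ.2 := by
  refine (Fintype.bijective_iff_injective_and_card _).mpr ⟨?_, ?_⟩
  · rintro ⟨p₁, τ₁⟩ ⟨p₂, τ₂⟩ (h : insertMin p₁ τ₁ = insertMin p₂ τ₂)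
    obtain rfl : p₁ = p₂ := (insertMin_eq_zero_iff p₂ τ₂).mp (by rw [← h, insertMin_self])
    obtain rfl : τ₁ = τ₂ := Equiv.ext fun k => Fin.succ_injective _ <| by
      simpa using congrArg (fun σ : Equiv.Perm (Fin (n + 1)) => σ (p₁.succAbove k)) h
    rfl
  · simp [Fintype.card_perm, Nat.factorial_succ]

noncomputable def insertionWeight (a b n : ℕ) : MvPolynomial (Fin 2) ℤ :=
  ∑ r ∈ range (n + 1), (if a ≤ r ∧ b ≤ n - r then xv else 1) * qv ^ r

lemma Rq_succ (a b n : ℕ) : Rq a b (n + 1) = insertionWeight a b n * Rq a b n := by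
  have term : ∀ (p : Fin (n + 1)) (τ : Equiv.Perm (Fin n)),
      xv ^ mmpAB a b (insertMin p τ) * qv ^ coinv (insertMin p τ) =
        (if a ≤ n - p ∧ b ≤ p then xv else 1) * qv ^ (n - p) *
          (xv ^ mmpAB a b τ * qv ^ coinv τ) := by
    intro p τ
    rw [mmpAB_insertMin, coinv_insertMin, pow_add, pow_add]
    split_ifs <;> ring
  have reflect : ∑ p : Fin (n + 1), (if a ≤ n - p ∧ b ≤ p then xv else 1) * qv ^ (n - p) =
      insertionWeight a b n := by
    rw [Fin.sum_univ_eq_sum_range (fun p => (if a ≤ n - p ∧ b ≤ p then xv else 1) * qv ^ (n - p)),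
      ← sum_range_reflect, insertionWeight]
    refine sum_congr rfl fun r hr => ?_
    rw [mem_range] at hr
    rw [show n + 1 - 1 - r = n - r by omega, show n - (n - r) = r by omega]
  rw [Rq, ← Fintype.sum_bijective _ (insertMin_bijective n) _ _ fun _ => rfl,
    Fintype.sum_prod_type]
  simp only [term, ← mul_sum, ← sum_mul, reflect, Rq]

lemma insertionWeight_of_lt {a b n : ℕ} (h : n < a + b) : insertionWeight a b n = qNat (n + 1) :=
  sum_congr rfl fun r hr => by
    rw [mem_range] at hr
    rw [if_neg (by omega), one_mul]

lemma insertionWeight_add_add (a b i : ℕ) : insertionWeight a b (a + b + i) =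
    qNat a + qv ^ (a + (i + 1)) * qNat b + qv ^ a * xv * qNat (i + 1) := by
  rw [insertionWeight, show a + b + i + 1 = a + (i + 1) + b by omega, sum_range_add,
    sum_range_add]
  have low : ∑ r ∈ range a, (if a ≤ r ∧ b ≤ a + b + i - r then xv else 1) * qv ^ r = qNat a :=
    sum_congr rfl fun r hr => by
      rw [mem_range] at hr
      rw [if_neg (by omega), one_mul]
  have mid : ∑ t ∈ range (i + 1),
      (if a ≤ a + t ∧ b ≤ a + b + i - (a + t) then xv else 1) * qv ^ (a + t) =
        qv ^ a * xv * qNat (i + 1) := by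
    rw [qNat, mul_sum]
    refine sum_congr rfl fun t ht => ?_
    rw [mem_range] at ht
    rw [if_pos (by omega), pow_add]
    ring
  have high : ∑ t ∈ range b,
      (if a ≤ a + (i + 1) + t ∧ b ≤ a + b + i - (a + (i + 1) + t) then xv else 1) *
        qv ^ (a + (i + 1) + t) = qv ^ (a + (i + 1)) * qNat b := by
    rw [qNat, mul_sum]
    refine sum_congr rfl fun t ht => ?_
    rw [mem_range] at ht
    rw [if_neg (by omega), one_mul, pow_add]
  rw [low, mid, high]
  ring

lemma Rq_eq_qFact {a b n : ℕ} (h : n ≤ a + b) : Rq a b n = qFact n := by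
  induction n with
  | zero => simp [Rq, mmpAB, coinv, qFact]
  | succ n ih =>
    rw [Rq_succ, insertionWeight_of_lt (by omega), ih (by omega), qFact, qFact, prod_range_succ,
      mul_comm]

lemma Rq_add_add (a b s : ℕ) : Rq a b (a + b + s) = qFact (a + b) *
    ∏ i ∈ Icc 1 s, (qNat a + qv ^ (a + i) * qNat b + qv ^ a * xv * qNat i) := by
  induction s with
  | zero => simp [Rq_eq_qFact le_rfl]
  | succ s ih =>
    rw [← add_assoc, Rq_succ, ih, insertionWeight_add_add, prod_Icc_succ_top (by omega)]
    ring

theorem stmt_8_general (a b : ℕ) :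
    (∀ n, n ≤ a + b → Rq a b n = qFact n) ∧
    (∀ s, 1 ≤ s → Rq a b (a + b + s) =
      qFact (a + b) *
        ∏ i ∈ Finset.Icc 1 s,
          (qNat a + qv ^ (a + i) * qNat b + qv ^ a * xv * qNat i)) :=
  ⟨fun _ => Rq_eq_qFact, fun s _ => Rq_add_add a b s⟩

theorem stmt_8 (a b : ℕ) (ha : 1 ≤ a) (hb : 1 ≤ b) :
    (∀ n, n ≤ a + b → Rq a b n = qFact n) ∧
    (∀ s, 1 ≤ s → Rq a b (a + b + s) =
      qFact (a + b) *
        ∏ i ∈ Finset.Icc 1 s,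
          (qNat a + qv ^ (a + i) * qNat b + qv ^ a * xv * qNat i)) :=
  stmt_8_general a b
end
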